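/- arXiv:2411.19236 — 3 statements merged into one kernel-verified Lean document; each statement's English description precedes it below -/
import Mathlib

section
/- Let 0 < r_a < r_s be real numbers, let φ ∈ (0, π), and let d be such that the quantity c := (r_s² + r_a² − d²)/(2·r_s·r_a·sin(φ)) satisfies 0 ≤ c < 1. Then the Lebesgue measure of the set {ω ∈ [0, 2π) : r_s² − 2·r_s·r_a·sin(ω)·sin(φ) + r_a² ≤ d²} equals 2·arcsin(sqrt(1 − cos²(ζ(d))/sin²(φ))), where ζ(d) = arccos((r_s² + r_a² − d²)/(2·r_s·r_a)), i.e., cos(ζ(d)) = (r_s² + r_a² − d²)/(2·r_s·r_a). -/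
/-!
Writing `c = (r_s² + r_a² − d²)/(2 r_s r_a sin φ)`, the defining inequality of the set says
`c ≤ sin ω`. For `0 ≤ c ≤ 1` this cuts out of `[0, 2π)` the interval
`[arcsin c, π − arcsin c]`, of length `2 arccos c`. On the other side `cos ζ(d) = c sin φ`,
so the claimed angle is `2 arcsin (√(1 − c²)) = 2 arccos c`.
-/

open Real Set

namespace Real

theorem le_sin_iff_mem_Icc_arcsin {c ω : ℝ} (hc : c ∈ Icc (-1 : ℝ) 1) (hω : ω ∈ Icc 0 π) :
    c ≤ sin ω ↔ ω ∈ Icc (arcsin c) (π - arcsin c) := by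
  have hle := arcsin_le_pi_div_two c
  rcases le_or_gt ω (π / 2) with hω2 | hω2
  · rw [← arcsin_le_iff_le_sin hc ⟨by linarith [hω.1], hω2⟩]
    exact ⟨fun h ↦ ⟨h, by linarith⟩, And.left⟩
  · -- reflect `ω` into `[0, π/2]` through `sin (π - ω) = sin ω`
    rw [← sin_pi_sub, ← arcsin_le_iff_le_sin hc ⟨by linarith [hω.2], by linarith⟩]
    exact ⟨fun h ↦ ⟨by linarith, by linarith⟩, fun h ↦ by linarith [h.2]⟩

theorem setOf_mem_Ico_and_le_sin {c : ℝ} (hc₀ : 0 ≤ c) (hc₁ : c ≤ 1) :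
    {ω : ℝ | ω ∈ Ico 0 (2 * π) ∧ c ≤ sin ω} = Icc (arcsin c) (π - arcsin c) := by
  have hc : c ∈ Icc (-1 : ℝ) 1 := ⟨by linarith, hc₁⟩
  have harcsin₀ : 0 ≤ arcsin c := arcsin_nonneg.mpr hc₀
  ext ω
  constructor
  · rintro ⟨⟨hω₀, hω₂π⟩, hsin⟩
    have hωπ : ω ≤ π := by
      by_contra! h
      have := sin_pos_of_pos_of_lt_pi (x := ω - π) (by linarith) (by linarith)
      rw [sin_sub_pi] at this
      linarith
    exact (le_sin_iff_mem_Icc_arcsin hc ⟨hω₀, hωπ⟩).mp hsin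
  · intro hω
    have hω' : ω ∈ Icc 0 π := ⟨harcsin₀.trans hω.1, by linarith [hω.2]⟩
    exact ⟨⟨hω'.1, by linarith [hω'.2, pi_pos]⟩, (le_sin_iff_mem_Icc_arcsin hc hω').mpr hω⟩

theorem volume_setOf_mem_Ico_and_le_sin {c : ℝ} (hc₀ : 0 ≤ c) (hc₁ : c ≤ 1) :
    MeasureTheory.volume {ω : ℝ | ω ∈ Ico 0 (2 * π) ∧ c ≤ sin ω}
      = ENNReal.ofReal (2 * arccos c) := by
  rw [setOf_mem_Ico_and_le_sin hc₀ hc₁, volume_Icc, arccos_eq_pi_div_two_sub_arcsin]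
  ring_nf

theorem arcsin_sqrt_one_sub_cos_arccos_mul_sq_div_sq {c s : ℝ} (hc₀ : 0 ≤ c) (hs : 0 < s)
    (hcs : c * s ≤ 1) :
    arcsin (√(1 - cos (arccos (c * s)) ^ 2 / s ^ 2)) = arccos c := by
  rw [cos_arccos (by nlinarith) hcs, mul_pow, mul_div_cancel_right₀ _ (by positivity),
    arccos_eq_arcsin hc₀]

end Real

/-- The Lebesgue measure of the set of argument angles `ω ∈ [0, 2π)` for which the
satellite on the orbit of radius `r_s` with inclination `φ` is within distance `d`
of `A = (0,0,r_a)` equals `2 arcsin (sqrt (1 − cos²(ζ(d))/sin²(φ)))`, where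
`ζ(d) = arccos((r_s² + r_a² − d²)/(2 r_s r_a))`. -/
theorem arc_measure_in_cap (r_a r_s d φ : ℝ) (h0 : 0 < r_a) (h1 : r_a < r_s)
    (hφ : φ ∈ Set.Ioo 0 Real.pi)
    (hc0 : 0 ≤ (r_s ^ 2 + r_a ^ 2 - d ^ 2) / (2 * r_s * r_a * Real.sin φ))
    (hc1 : (r_s ^ 2 + r_a ^ 2 - d ^ 2) / (2 * r_s * r_a * Real.sin φ) < 1) :
    MeasureTheory.volume {ω : ℝ | ω ∈ Set.Ico 0 (2 * Real.pi) ∧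
        r_s ^ 2 - 2 * r_s * r_a * Real.sin ω * Real.sin φ + r_a ^ 2 ≤ d ^ 2}
      = ENNReal.ofReal (2 * Real.arcsin (Real.sqrt (1 -
          Real.cos (Real.arccos ((r_s ^ 2 + r_a ^ 2 - d ^ 2) / (2 * r_s * r_a))) ^ 2
            / Real.sin φ ^ 2))) := by
  have hsinφ : 0 < sin φ := sin_pos_of_pos_of_lt_pi hφ.1 hφ.2
  have hden : 0 < 2 * r_s * r_a * sin φ := by have := h0.trans h1; positivity
  set c := (r_s ^ 2 + r_a ^ 2 - d ^ 2) / (2 * r_s * r_a * sin φ)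
  have hcos_zeta : (r_s ^ 2 + r_a ^ 2 - d ^ 2) / (2 * r_s * r_a) = c * sin φ := by
    rw [div_mul_eq_mul_div, mul_div_mul_right _ _ hsinφ.ne']
  have hcap : ∀ ω, r_s ^ 2 - 2 * r_s * r_a * sin ω * sin φ + r_a ^ 2 ≤ d ^ 2 ↔ c ≤ sin ω := by
    intro ω
    rw [div_le_iff₀ hden]
    constructor <;> intro h <;> linarith
  have hcs : c * sin φ ≤ 1 := by nlinarith [sin_le_one φ]
  simp_rw [hcap, volume_setOf_mem_Ico_and_le_sin hc0 hc1.le, hcos_zeta,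
    arcsin_sqrt_one_sub_cos_arccos_mul_sq_div_sq hc0 hsinφ hcs]
end

section
/- Let λ > 0, φ̄ ∈ (0, π/2], ν ≥ 0, and t ≥ 0. Then, as μ → ∞, exp(−λ·∫_{0}^{φ̄} cos(φ)·(1 − exp(−(μ/(2π))·(ν·t + 2·arcsin(sqrt(1 − cos²(φ̄)/cos²(φ)))))) dφ) converges to exp(−λ·sin(φ̄)). -/
/-!
For `0 < φ < φ̄ ≤ π/2` we have `cos φ̄ < cos φ`, so the arcsine term, and hence the exponent
`ν t + 2 arcsin(…)`, is strictly positive. The factor `1 - exp (-(μ / 2π) · (…))` therefore tends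
to `1` almost everywhere on `(0, φ̄)` while staying in `[0, 1]`; by dominated convergence the
integral tends to `∫₀^φ̄ cos = sin φ̄`, and continuity of `exp` finishes the proof.
-/

open Filter MeasureTheory Real Topology Set

theorem abs_one_sub_exp_neg_le_one {x : ℝ} (hx : 0 ≤ x) : |1 - exp (-x)| ≤ 1 := by
  have h1 : exp (-x) ≤ 1 := exp_le_one_iff.2 (neg_nonpos.2 hx)
  rw [abs_le]
  constructor <;> linarith [exp_pos (-x)]

theorem tendsto_integral_mul_one_sub_exp_neg_mul {α : Type*} [MeasurableSpace α]
    {m : Measure α} {f g : α → ℝ} (hf : Integrable f m) (hg : AEStronglyMeasurable g m)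
    (hg_pos : ∀ᵐ x ∂m, 0 < g x) :
    Tendsto (fun s : ℝ => ∫ x, f x * (1 - exp (-(s * g x))) ∂m) atTop (𝓝 (∫ x, f x ∂m)) := by
  refine tendsto_integral_filter_of_dominated_convergence (fun x => ‖f x‖) ?_ ?_ hf.norm ?_
  · exact .of_forall fun s =>
      hf.1.mul (aestronglyMeasurable_const.sub
        (continuous_exp.comp_aestronglyMeasurable (hg.const_mul s).neg))
  · filter_upwards [eventually_ge_atTop 0] with s hs
    filter_upwards [hg_pos] with x hx
    rw [norm_mul]
    exact mul_le_of_le_one_right (norm_nonneg _) (abs_one_sub_exp_neg_le_one (mul_nonneg hs hx.le))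
  · filter_upwards [hg_pos] with x hx
    have hexp : Tendsto (fun s : ℝ => exp (-(s * g x))) atTop (𝓝 0) :=
      tendsto_exp_neg_atTop_nhds_zero.comp (tendsto_id.atTop_mul_const hx)
    simpa using (hexp.const_sub 1).const_mul (f x)

theorem cos_sq_div_cos_sq_lt_one {φ ψ : ℝ} (hφ : 0 ≤ φ) (hφψ : φ < ψ) (hψ : ψ ≤ π / 2) :
    cos ψ ^ 2 / cos φ ^ 2 < 1 := by
  have hcosφ : 0 < cos φ := cos_pos_of_mem_Ioo ⟨by linarith [pi_pos], by linarith⟩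
  have hcos : cos ψ < cos φ := cos_lt_cos_of_nonneg_of_le_pi hφ (by linarith [pi_pos]) hφψ
  have hcosψ : 0 ≤ cos ψ := cos_nonneg_of_mem_Icc ⟨by linarith [pi_pos], hψ⟩
  rw [div_lt_one (by positivity)]
  nlinarith

theorem arcsin_sqrt_one_sub_cos_sq_div_pos {φ ψ : ℝ} (hφ : 0 ≤ φ) (hφψ : φ < ψ) (hψ : ψ ≤ π / 2) :
    0 < arcsin (√(1 - cos ψ ^ 2 / cos φ ^ 2)) :=
  arcsin_pos.2 <| sqrt_pos.2 <| sub_pos.2 <| cos_sq_div_cos_sq_lt_one hφ hφψ hψ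

theorem delay_ccdf_limit_general (lam φb ν t : ℝ)
    (hφb : φb ∈ Set.Ioc 0 (Real.pi / 2)) (hν : 0 ≤ ν) (ht : 0 ≤ t) :
    Filter.Tendsto (fun μ : ℝ =>
        Real.exp (-lam * ∫ φ in (0:ℝ)..φb, Real.cos φ *
          (1 - Real.exp (-(μ / (2 * Real.pi)) * (ν * t +
            2 * Real.arcsin (Real.sqrt (1 - Real.cos φb ^ 2 / Real.cos φ ^ 2)))))))
      Filter.atTop (nhds (Real.exp (-lam * Real.sin φb))) := by
  obtain ⟨hφb0, hφb2⟩ := hφb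
  set a : ℝ → ℝ := fun φ => ν * t + 2 * arcsin (√(1 - cos φb ^ 2 / cos φ ^ 2))
  have ha_pos : ∀ᵐ φ ∂volume.restrict (Ioc 0 φb), 0 < a φ := by
    rw [← Measure.restrict_congr_set Ioo_ae_eq_Ioc]
    refine ae_restrict_of_forall_mem measurableSet_Ioo fun φ hφ => ?_
    have := arcsin_sqrt_one_sub_cos_sq_div_pos hφ.1.le hφ.2 hφb2
    positivity
  have hint := tendsto_integral_mul_one_sub_exp_neg_mul continuous_cos.integrableOn_Ioc
    (by fun_prop : Measurable a).aestronglyMeasurable ha_pos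
  simp_rw [← intervalIntegral.integral_of_le hφb0.le, integral_cos, sin_zero, sub_zero] at hint
  have hscale : Tendsto (fun μ : ℝ => μ / (2 * π)) atTop atTop :=
    tendsto_id.atTop_div_const (by positivity)
  simpa only [Function.comp_def, neg_mul] using
    (continuous_exp.tendsto _).comp ((hint.comp hscale).const_mul (-lam))

/-- As the mean number of satellites per orbit `μ` tends to infinity, the delay CCDF of
Theorem 6 converges to `exp (−λ sin φ̄)`. -/
theorem delay_ccdf_limit (lam φb ν t : ℝ) (hlam : 0 < lam)
    (hφb : φb ∈ Set.Ioc 0 (Real.pi / 2)) (hν : 0 ≤ ν) (ht : 0 ≤ t) :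
    Filter.Tendsto (fun μ : ℝ =>
        Real.exp (-lam * ∫ φ in (0:ℝ)..φb, Real.cos φ *
          (1 - Real.exp (-(μ / (2 * Real.pi)) * (ν * t +
            2 * Real.arcsin (Real.sqrt (1 - Real.cos φb ^ 2 / Real.cos φ ^ 2)))))))
      Filter.atTop (nhds (Real.exp (-lam * Real.sin φb))) :=
  delay_ccdf_limit_general lam φb ν t hφb hν ht
end

section
/- Let λ > 0 and μ > 0. The function F : [0, π/2] → ℝ defined by F(a) = 1 − exp(−λ·∫_{0}^{a} cos(φ)·(1 − exp(−(μ/π)·arcsin(sqrt(1 − cos²(a)/cos²(φ))))) dφ) is strictly increasing on [0, π/2]. -/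
/-!
Write the integrand as `cos φ · (1 - exp (-κ · arcsin √(1 - c / cos² φ)))` with `c = cos² a`.
Raising the cap angle from `a` to `b` lowers `c`, which can only enlarge the integrand on `[0, a]`,
and adds the piece `∫ φ in a..b`, whose integrand is strictly positive because `cos² b < cos² φ`
there. So the integral is strictly increasing in the cap angle, and so is `t ↦ 1 - exp (-λ t)`.
-/

open Real Set MeasureTheory

noncomputable def capIntegrand (κ c φ : ℝ) : ℝ :=
  cos φ * (1 - exp (-κ * arcsin (√(1 - c / cos φ ^ 2))))

section CapIntegrand

variable {κ : ℝ}

lemma abs_capIntegrand_le_one (hκ : 0 ≤ κ) (c φ : ℝ) : |capIntegrand κ c φ| ≤ 1 := by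
  have harcsin : 0 ≤ arcsin (√(1 - c / cos φ ^ 2)) := arcsin_nonneg.2 (sqrt_nonneg _)
  have hexp_le : exp (-κ * arcsin (√(1 - c / cos φ ^ 2))) ≤ 1 :=
    exp_le_one_iff.2 (by nlinarith)
  have hexp_pos := exp_pos (-κ * arcsin (√(1 - c / cos φ ^ 2)))
  rw [capIntegrand, abs_mul]
  exact mul_le_one₀ (abs_cos_le_one φ) (abs_nonneg _) (abs_le.2 ⟨by linarith, by linarith⟩)

lemma intervalIntegrable_capIntegrand (hκ : 0 ≤ κ) (c x y : ℝ) :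
    IntervalIntegrable (capIntegrand κ c) volume x y := by
  refine (intervalIntegrable_const (c := (1 : ℝ))).mono_fun ?_ (ae_of_all _ fun φ => ?_)
  · exact (by unfold capIntegrand; fun_prop : Measurable (capIntegrand κ c)).aestronglyMeasurable
  · simpa using abs_capIntegrand_le_one hκ c φ

lemma capIntegrand_antitone (hκ : 0 ≤ κ) {φ : ℝ} (hφ : 0 ≤ cos φ) :
    Antitone fun c => capIntegrand κ c φ := by
  intro c d hcd
  simp only [capIntegrand, neg_mul]
  gcongr

lemma capIntegrand_pos (hκ : 0 < κ) {c φ : ℝ} (hφ : 0 < cos φ) (hc : c < cos φ ^ 2) :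
    0 < capIntegrand κ c φ := by
  have hratio : c / cos φ ^ 2 < 1 := (div_lt_one (by positivity)).2 hc
  have harcsin : 0 < arcsin (√(1 - c / cos φ ^ 2)) :=
    arcsin_pos.2 (sqrt_pos.2 (by linarith))
  have hexp : exp (-κ * arcsin (√(1 - c / cos φ ^ 2))) < 1 :=
    exp_lt_one_iff.2 (by nlinarith)
  exact mul_pos hφ (by linarith)

end CapIntegrand

lemma capIntegral_strictMonoOn {κ : ℝ} (hκ : 0 < κ) :
    StrictMonoOn (fun a => ∫ φ in (0 : ℝ)..a, capIntegrand κ (cos a ^ 2) φ) (Icc 0 (π / 2)) := by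
  rintro a ⟨ha0, -⟩ b ⟨-, hbπ⟩ hab
  have hint : ∀ c x y, IntervalIntegrable (capIntegrand κ c) volume x y :=
    intervalIntegrable_capIntegrand hκ.le
  have hcos_b : 0 ≤ cos b := cos_nonneg_of_mem_Icc ⟨by linarith [pi_pos], hbπ⟩
  have hcos_sq : cos b ^ 2 ≤ cos a ^ 2 := by
    have := cos_lt_cos_of_nonneg_of_le_pi_div_two ha0 hbπ hab
    nlinarith
  have hle : ∫ φ in (0 : ℝ)..a, capIntegrand κ (cos a ^ 2) φ
      ≤ ∫ φ in (0 : ℝ)..a, capIntegrand κ (cos b ^ 2) φ :=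
    intervalIntegral.integral_mono_on ha0 (hint _ _ _) (hint _ _ _) fun φ hφ =>
      capIntegrand_antitone hκ.le
        (cos_nonneg_of_mem_Icc ⟨by linarith [pi_pos, hφ.1], by linarith [hφ.2]⟩) hcos_sq
  have hpos : 0 < ∫ φ in a..b, capIntegrand κ (cos b ^ 2) φ := by
    refine intervalIntegral.intervalIntegral_pos_of_pos_on (hint _ _ _) (fun φ hφ => ?_) hab
    have hcos_lt : cos b < cos φ :=
      cos_lt_cos_of_nonneg_of_le_pi_div_two (by linarith [hφ.1]) hbπ hφ.2
    exact capIntegrand_pos hκ (by linarith) (by nlinarith)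
  calc ∫ φ in (0 : ℝ)..a, capIntegrand κ (cos a ^ 2) φ
      < (∫ φ in (0 : ℝ)..a, capIntegrand κ (cos b ^ 2) φ)
        + ∫ φ in a..b, capIntegrand κ (cos b ^ 2) φ := by linarith
    _ = ∫ φ in (0 : ℝ)..b, capIntegrand κ (cos b ^ 2) φ :=
        intervalIntegral.integral_add_adjacent_intervals (hint _ _ _) (hint _ _ _)

/-- The connectivity probability of Theorem 2, viewed as a function of the cap angle,
is strictly increasing on `[0, π/2]`. -/
theorem connectivity_strictMono (lam μ : ℝ) (hlam : 0 < lam) (hμ : 0 < μ) :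
    StrictMonoOn (fun a : ℝ =>
        1 - Real.exp (-lam * ∫ φ in (0:ℝ)..a, Real.cos φ *
          (1 - Real.exp (-(μ / Real.pi) *
            Real.arcsin (Real.sqrt (1 - Real.cos a ^ 2 / Real.cos φ ^ 2))))))
      (Set.Icc 0 (Real.pi / 2)) := by
  have houter : StrictMono fun t : ℝ => 1 - exp (-lam * t) := fun s t hst => by
    have := exp_lt_exp.2 (show -lam * t < -lam * s by nlinarith)
    linarith
  exact houter.comp_strictMonoOn (capIntegral_strictMonoOn (div_pos hμ pi_pos))
end
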